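/- Frustration index via spanning trees for U(1)-signatures: let S ⊆ V induce a connected subgraph of a finite weighted graph with signature σ: E^{or} → U(1). Then ι^σ(S) := min over τ: S → U(1) of ∑_{{x,y}∈E_S} w_{xy}|σ_{xy}τ(y) − τ(x)| equals the minimum over spanning trees T of the induced subgraph on S of ∑_{{x,y}∈E_S} w_{xy}|σ_{xy}τ_T(y) − τ_T(x)|, where τ_T: S → U(1) is any function satisfying σ_{xy}τ_T(y) = τ_T(x) for all oriented edges (x,y) of T (such functions exist and any two differ by a global unit constant, so the sum is well-defined). -/

import Mathlib

open Finset Filter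

noncomputable section

variable {V : Type*} [Fintype V] [DecidableEq V]

/-- The value `∑_{{x,y} ∈ E_S} w_{xy} |σ_{xy} τ(y) - τ(x)|` (edges counted via
ordered pairs and halved). -/
def frustVal (w : V → V → ℝ) (σ : V → V → ℂ) (S : Finset V) (τ : V → ℂ) : ℝ :=
  (1 / 2) * ∑ x ∈ S, ∑ y ∈ S, w x y * ‖σ x y * τ y - τ x‖

/-- The induced subgraph on `S` is connected. -/
def ConnOn (w : V → V → ℝ) (S : Finset V) : Prop :=
  ∀ x ∈ S, ∀ y ∈ S,
    Relation.ReflTransGen (fun a b => a ∈ S ∧ b ∈ S ∧ a ≠ b ∧ w a b ≠ 0) x y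

lemma chord (a b : ℝ) :
    ‖Complex.exp (a * Complex.I) - Complex.exp (b * Complex.I)‖
      = 2 * |Real.sin ((a - b) / 2)| := by
  have h1 : Complex.exp (a * Complex.I) - Complex.exp (b * Complex.I)
      = Complex.exp (((a + b) / 2 : ℝ) * Complex.I) *
        (Complex.exp (((a - b) / 2 : ℝ) * Complex.I)
          - Complex.exp ((-((a - b) / 2) : ℝ) * Complex.I)) := by
    rw [mul_sub, ← Complex.exp_add, ← Complex.exp_add]
    push_cast
    ring_nf
  rw [h1, norm_mul]
  have h2 : ‖Complex.exp (((a + b) / 2 : ℝ) * Complex.I)‖ = 1 := by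
    simpa using Complex.norm_exp_ofReal_mul_I ((a + b) / 2)
  rw [h2, one_mul]
  set t : ℝ := (a - b) / 2
  have h3 : Complex.exp ((t : ℝ) * Complex.I) - Complex.exp ((-t : ℝ) * Complex.I)
      = 2 * Real.sin t * Complex.I := by
    push_cast
    rw [Complex.exp_mul_I, Complex.exp_mul_I]
    simp [Complex.cos_neg, Complex.sin_neg]
    ring
  rw [h3]
  simp [norm_mul, Complex.norm_real]
  rw [← Complex.ofReal_sin, Complex.norm_real, Real.norm_eq_abs]

lemma rsin_add_sin (x y : ℝ) :
    Real.sin x + Real.sin y = 2 * Real.sin ((x + y) / 2) * Real.cos ((x - y) / 2) := by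
  have h := Real.sin_sub_sin x (-y)
  simpa [sub_neg_eq_add, Real.sin_neg, ← sub_eq_add_neg] using h

lemma rot {ι : Type*} [Fintype ι] (wt : ι → ℝ) (c : ι → ℂ)
    (hw : ∀ e, 0 ≤ wt e) (hc : ∀ e, ‖c e‖ = 1) {e0 : ι} (h0 : wt e0 ≠ 0) :
    ∃ e, wt e ≠ 0 ∧ ∀ u : ℂ, ‖u‖ = 1 →
      ∑ e', wt e' * ‖c e - c e'‖ ≤ ∑ e', wt e' * ‖u - c e'‖ := by
  classical
  set g : ℂ → ℝ := fun u => ∑ e', wt e' * ‖u - c e'‖ with hg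
  have hgc : Continuous g := by
    apply continuous_finset_sum
    intro e _
    exact continuous_const.mul ((continuous_id.sub continuous_const).norm)
  obtain ⟨u0, hu0mem, hu0min⟩ := (isCompact_sphere (0:ℂ) 1).exists_isMinOn
    ⟨1, by simp⟩ hgc.continuousOn
  have hu0 : ‖u0‖ = 1 := by simpa using hu0mem
  by_cases hex : ∃ e, wt e ≠ 0 ∧ c e = u0
  · obtain ⟨e, he, hce⟩ := hex
    refine ⟨e, he, fun u hu => ?_⟩
    rw [hce]
    exact hu0min (by simp [hu])
  · exfalso
    push_neg at hex
    set θ := Complex.arg u0 with hθ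
    set β : ι → ℝ := fun e => Complex.arg (c e) with hβ
    have hu0e : Complex.exp ((θ : ℝ) * Complex.I) = u0 := by
      have := Complex.norm_mul_exp_arg_mul_I u0
      rwa [hu0,
        Complex.ofReal_one, one_mul] at this
    have hce : ∀ e, Complex.exp ((β e : ℝ) * Complex.I) = c e := by
      intro e
      have := Complex.norm_mul_exp_arg_mul_I (c e)
      rwa [hc,
        Complex.ofReal_one, one_mul] at this
    set d : ι → ℝ := fun e => θ - β e with hd
    set s : ι → ℝ := fun e => Real.sin (d e / 2) with hs
    have hnorm : ∀ (e : ι) (ε : ℝ),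
        ‖Complex.exp (((θ + ε : ℝ)) * Complex.I) - c e‖ = 2 * |Real.sin ((d e + ε) / 2)| := by
      intro e ε
      rw [← hce e, chord]
      congr 2
      simp only [hd]
      ring
    have hnorm0 : ∀ e : ι, ‖u0 - c e‖ = 2 * |s e| := by
      intro e
      have := hnorm e 0
      rw [add_zero, hu0e] at this
      simpa [hs] using this
    have hs0 : ∀ e, wt e ≠ 0 → s e ≠ 0 := by
      intro e he hse
      apply hex e he
      have : ‖u0 - c e‖ = 0 := by rw [hnorm0 e, hse]; simp
      rw [norm_sub_eq_zero_iff] at this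
      exact this.symm
    -- choose ε
    have hev : ∀ᶠ ε : ℝ in nhds 0, (∀ e, wt e ≠ 0 →
        (0 < Real.sin ((d e + ε) / 2) * s e ∧ 0 < Real.sin ((d e - ε) / 2) * s e))
        ∧ |ε| < 1 := by
      refine Filter.Eventually.and (eventually_all.2 fun e => ?_) ?_
      · refine Filter.eventually_imp_distrib_left.2 fun he => ?_
        have hcont1 : ContinuousAt (fun ε : ℝ => Real.sin ((d e + ε) / 2) * s e) 0 := by
          fun_prop
        have hcont2 : ContinuousAt (fun ε : ℝ => Real.sin ((d e - ε) / 2) * s e) 0 := by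
          fun_prop
        have hpos : 0 < s e * s e := by
          rcases (hs0 e he).lt_or_gt with h | h
          · exact mul_pos_of_neg_of_neg h h
          · exact mul_pos h h
        have h1 : ∀ᶠ ε : ℝ in nhds 0, 0 < Real.sin ((d e + ε) / 2) * s e :=
          hcont1.eventually (lt_mem_nhds
            (show (0:ℝ) < Real.sin ((d e + 0) / 2) * s e by simpa [hs] using hpos))
        have h2 : ∀ᶠ ε : ℝ in nhds 0, 0 < Real.sin ((d e - ε) / 2) * s e :=
          hcont2.eventually (lt_mem_nhds
            (show (0:ℝ) < Real.sin ((d e - 0) / 2) * s e by simpa [hs] using hpos))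
        exact h1.and h2
      · have habs : ContinuousAt (fun ε : ℝ => |ε|) 0 := continuous_abs.continuousAt
        simpa using habs.eventually (gt_mem_nhds (show |(0:ℝ)| < 1 by simp))
    rw [Metric.eventually_nhds_iff] at hev
    obtain ⟨δ, hδ, hP⟩ := hev
    set ε : ℝ := δ / 2 with hεdef
    have hεpos : 0 < ε := by positivity
    have hεd : dist ε (0:ℝ) < δ := by
      rw [Real.dist_eq, sub_zero, abs_of_pos hεpos]
      simpa [hεdef] using half_lt_self hδ
    obtain ⟨hsign, hε1⟩ := hP hεd
    have hcos : Real.cos (ε / 2) < 1 := by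
      refine lt_of_le_of_ne (Real.cos_le_one _) fun hc => ?_
      have hπ := Real.pi_gt_three
      have hε1' : ε < 1 := by rwa [abs_of_pos hεpos] at hε1
      rw [Real.cos_eq_one_iff_of_lt_of_lt (by linarith) (by linarith)] at hc
      linarith
    have key : ∀ e, wt e ≠ 0 →
        |Real.sin ((d e + ε) / 2)| + |Real.sin ((d e - ε) / 2)|
          = Real.cos (ε / 2) * (2 * |s e|) := by
      intro e he
      obtain ⟨p1, p2⟩ := hsign e he
      have hsum : Real.sin ((d e + ε) / 2) + Real.sin ((d e - ε) / 2)
          = 2 * s e * Real.cos (ε / 2) := by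
        have h := rsin_add_sin ((d e + ε) / 2) ((d e - ε) / 2)
        rw [show ((d e + ε) / 2 + (d e - ε) / 2) / 2 = d e / 2 by ring,
          show ((d e + ε) / 2 - (d e - ε) / 2) / 2 = ε / 2 by ring] at h
        rw [h, hs]
      rcases (hs0 e he).lt_or_gt with hneg | hpos
      · have q1 : Real.sin ((d e + ε) / 2) < 0 := by nlinarith
        have q2 : Real.sin ((d e - ε) / 2) < 0 := by nlinarith
        rw [abs_of_neg q1, abs_of_neg q2, abs_of_neg hneg]
        linarith
      · have q1 : 0 < Real.sin ((d e + ε) / 2) := by nlinarith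
        have q2 : 0 < Real.sin ((d e - ε) / 2) := by nlinarith
        rw [abs_of_pos q1, abs_of_pos q2, abs_of_pos hpos]
        linarith
    have gsum : g (Complex.exp (((θ + ε : ℝ)) * Complex.I))
          + g (Complex.exp (((θ - ε : ℝ)) * Complex.I))
        = Real.cos (ε / 2) * (2 * g u0) := by
      simp only [hg]
      rw [← Finset.sum_add_distrib, Finset.mul_sum, Finset.mul_sum]
      refine Finset.sum_congr rfl fun e _ => ?_
      by_cases he : wt e = 0
      · simp [he]
      · rw [show ((θ - ε : ℝ)) = ((θ + (-ε) : ℝ)) by ring, hnorm e ε, hnorm e (-ε),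
          show d e + -ε = d e - ε by ring, hnorm0 e]
        have hk := key e he
        linear_combination (2 * wt e) * hk
    have hgpos : 0 < g u0 := by
      simp only [hg]
      have h1 : 0 < wt e0 * ‖u0 - c e0‖ := by
        have : 0 < |s e0| := abs_pos.2 (hs0 e0 h0)
        have : 0 < ‖u0 - c e0‖ := by rw [hnorm0 e0]; linarith
        exact mul_pos ((hw e0).lt_of_ne' h0) this
      refine lt_of_lt_of_le h1 ?_
      exact Finset.single_le_sum (f := fun i => wt i * ‖u0 - c i‖)
        (fun i _ => mul_nonneg (hw i) (norm_nonneg _)) (Finset.mem_univ e0)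
    have hmem : ∀ x : ℝ, Complex.exp ((x : ℝ) * Complex.I) ∈ Metric.sphere (0:ℂ) 1 := by
      intro x
      rw [mem_sphere_zero_iff_norm]
      exact Complex.norm_exp_ofReal_mul_I x
    have hmin1 := hu0min (hmem (θ + ε))
    have hmin2 := hu0min (hmem (θ - ε))
    simp only [Set.mem_setOf_eq] at hmin1 hmin2
    have : Real.cos (ε / 2) * (2 * g u0) < 1 * (2 * g u0) :=
      mul_lt_mul_of_pos_right hcos (by linarith)
    have hm1 : g u0 ≤ g (Complex.exp (((θ + ε : ℝ)) * Complex.I)) := hmin1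
    have hm2 : g u0 ≤ g (Complex.exp (((θ - ε : ℝ)) * Complex.I)) := hmin2
    linarith



lemma exists_spanning_tree {W : Type*} [Fintype W] {G : SimpleGraph W}
    (hG : G.Connected) : ∃ T ≤ G, T.IsTree := by
  classical
  obtain ⟨n, hn⟩ : ∃ n, G.edgeSet.ncard = n := ⟨_, rfl⟩
  induction n using Nat.strong_induction_on generalizing G with
  | _ n ih =>
    by_cases hac : G.IsAcyclic
    · exact ⟨G, le_rfl, ⟨hG, hac⟩⟩
    · rw [SimpleGraph.isAcyclic_iff_forall_adj_isBridge] at hac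
      push_neg at hac
      obtain ⟨v, w₀, hadj, hnb⟩ := hac
      rw [SimpleGraph.isBridge_iff] at hnb
      push_neg at hnb
      have hreach : (G \ SimpleGraph.fromEdgeSet {s(v, w₀)}).Reachable v w₀ := hnb
      set G' : SimpleGraph W := G \ SimpleGraph.fromEdgeSet {s(v, w₀)} with hG'
      have hle : G' ≤ G := sdiff_le
      have hadj' : ∀ a b, G.Adj a b → G'.Reachable a b := by
        intro a b hab
        by_cases he : s(a, b) = s(v, w₀)
        · rw [Sym2.eq_iff] at he
          rcases he with ⟨rfl, rfl⟩ | ⟨rfl, rfl⟩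
          · exact hreach
          · exact hreach.symm
        · refine SimpleGraph.Adj.reachable ?_
          simp only [hG', SimpleGraph.sdiff_adj, SimpleGraph.fromEdgeSet_adj]
          exact ⟨hab, by simp [he]⟩
      have hconn' : G'.Connected := by
        haveI : Nonempty W := hG.nonempty
        refine SimpleGraph.Connected.mk fun a b => ?_
        have := hG.preconnected a b
        rw [SimpleGraph.reachable_iff_reflTransGen] at this
        induction this with
        | refl => exact SimpleGraph.Reachable.refl _
        | tail _ h2 ih2 => exact ih2.trans (hadj' _ _ h2)
      have hlt : G' < G := by
        refine lt_of_le_of_ne hle fun h => ?_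
        have : G'.Adj v w₀ := h ▸ hadj
        simp [hG', SimpleGraph.sdiff_adj, SimpleGraph.fromEdgeSet_adj, hadj.ne] at this
      have hcard : G'.edgeSet.ncard < n := by
        rw [← hn]
        exact Set.ncard_lt_ncard (SimpleGraph.edgeSet_ssubset_edgeSet.2 hlt)
          (G.edgeSet.toFinite)
      obtain ⟨T, hT, hTt⟩ := ih _ hcard hconn' rfl
      exact ⟨T, hT.trans hle, hTt⟩


lemma cross_of_chain {α : Type*} {R : α → α → Prop} {P : α → Prop} {p q : α}
    (h : Relation.ReflTransGen R p q) (hp : P p) (hq : ¬ P q) :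
    ∃ x y, R x y ∧ P x ∧ ¬ P y := by
  revert hq
  induction h with
  | refl => exact fun hq => absurd hp hq
  | @tail b c h1 h2 ih =>
    intro hq
    by_cases hb : P b
    · exact ⟨b, c, h2, hb, hq⟩
    · exact ih hb

def Hgraph (w : V → V → ℝ) (σ : V → V → ℂ) (S : Finset V) (τ : V → ℂ) :
    SimpleGraph {x : V // x ∈ S} where
  Adj a b := a ≠ b ∧ w a.1 b.1 ≠ 0 ∧ w b.1 a.1 ≠ 0 ∧
    σ a.1 b.1 * τ b.1 = τ a.1 ∧ σ b.1 a.1 * τ a.1 = τ b.1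
  symm := ⟨fun a b h => ⟨h.1.symm, h.2.2.1, h.2.1, h.2.2.2.2, h.2.2.2.1⟩⟩
  loopless := ⟨fun a h => h.1 rfl⟩

lemma frustVal_nonneg (w : V → V → ℝ) (σ : V → V → ℂ) (S : Finset V) (τ : V → ℂ)
    (hw_nn : ∀ x y, 0 ≤ w x y) : 0 ≤ frustVal w σ S τ := by
  refine mul_nonneg (by norm_num) (Finset.sum_nonneg fun x _ => Finset.sum_nonneg fun y _ => ?_)
  exact mul_nonneg (hw_nn x y) (norm_nonneg _)

lemma exists_connected (w : V → V → ℝ) (σ : V → V → ℂ)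
    (hw_symm : ∀ x y, w x y = w y x)
    (hw_nn : ∀ x y, 0 ≤ w x y)
    (hσu : ∀ x y, ‖σ x y‖ = 1)
    (hσs : ∀ x y, σ y x = (σ x y)⁻¹)
    (S : Finset V) (hS : S.Nonempty) (hconn : ConnOn w S)
    (τ : V → ℂ) (hτ : ∀ x, ‖τ x‖ = 1) :
    ∃ τ' : V → ℂ, (∀ x, ‖τ' x‖ = 1) ∧ frustVal w σ S τ' ≤ frustVal w σ S τ ∧
      (Hgraph w σ S τ').Connected := by
  classical
  obtain ⟨a0, ha0⟩ := hS
  set A : {x : V // x ∈ S} := ⟨a0, ha0⟩ with hA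
  have hτne₀ : ∀ (τ₁ : V → ℂ), (∀ x, ‖τ₁ x‖ = 1) → ∀ v, τ₁ v ≠ 0 := by
    intro τ₁ h v hv
    simpa [hv] using h v
  have hσne : ∀ x y, σ x y ≠ 0 := by
    intro x y h
    simpa [h] using hσu x y
  suffices H : ∀ (n : ℕ) (τ : V → ℂ), (∀ x, ‖τ x‖ = 1) →
      Fintype.card {x : V // x ∈ S} ≤
        n + (Finset.univ.filter (fun b => (Hgraph w σ S τ).Reachable A b)).card →
      ∃ τ' : V → ℂ, (∀ x, ‖τ' x‖ = 1) ∧ frustVal w σ S τ' ≤ frustVal w σ S τ ∧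
        (Hgraph w σ S τ').Connected by
    exact H (Fintype.card {x : V // x ∈ S}) τ hτ (Nat.le_add_right _ _)
  intro n
  induction n with
  | zero =>
    intro τ hτ hcard
    refine ⟨τ, hτ, le_refl _, ?_⟩
    have huniv : (Finset.univ.filter (fun b => (Hgraph w σ S τ).Reachable A b)) = Finset.univ := by
      apply Finset.eq_univ_of_card
      refine le_antisymm (Finset.card_le_univ _) ?_
      simpa [Fintype.card] using hcard
    haveI : Nonempty {x : V // x ∈ S} := ⟨A⟩
    refine SimpleGraph.Connected.mk fun p q => ?_
    have hp : p ∈ Finset.univ.filter (fun b => (Hgraph w σ S τ).Reachable A b) := by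
      rw [huniv]; exact Finset.mem_univ _
    have hq : q ∈ Finset.univ.filter (fun b => (Hgraph w σ S τ).Reachable A b) := by
      rw [huniv]; exact Finset.mem_univ _
    rw [Finset.mem_filter] at hp hq
    exact hp.2.symm.trans hq.2
  | succ n ih =>
    intro τ hτ hcard
    by_cases hfull : (Finset.univ.filter (fun b => (Hgraph w σ S τ).Reachable A b)) = Finset.univ
    · haveI : Nonempty {x : V // x ∈ S} := ⟨A⟩
      refine ⟨τ, hτ, le_refl _, SimpleGraph.Connected.mk fun p q => ?_⟩
      have hp : p ∈ Finset.univ.filter (fun b => (Hgraph w σ S τ).Reachable A b) := by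
        rw [hfull]; exact Finset.mem_univ _
      have hq : q ∈ Finset.univ.filter (fun b => (Hgraph w σ S τ).Reachable A b) := by
        rw [hfull]; exact Finset.mem_univ _
      rw [Finset.mem_filter] at hp hq
      exact hp.2.symm.trans hq.2
    · -- there is an unreachable vertex b
      have hτne : ∀ v, τ v ≠ 0 := hτne₀ τ hτ
      obtain ⟨b, hb⟩ : ∃ b, ¬ (Hgraph w σ S τ).Reachable A b := by
        by_contra hbc
        push_neg at hbc
        exact hfull (Finset.eq_univ_of_forall fun b => Finset.mem_filter.2 ⟨Finset.mem_univ _, hbc b⟩)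
      set Cs : Set V := {v | ∃ h : v ∈ S, (Hgraph w σ S τ).Reachable A ⟨v, h⟩} with hCs
      have hmemCs : ∀ p : {x : V // x ∈ S}, p.1 ∈ Cs ↔ (Hgraph w σ S τ).Reachable A p := by
        intro p
        constructor
        · rintro ⟨h, hr⟩
          convert hr using 1
        · intro hr
          exact ⟨p.2, by convert hr using 1⟩
      set Xing : V → V → Prop := fun x y => (x ∈ Cs ∧ y ∉ Cs) ∨ (y ∈ Cs ∧ x ∉ Cs) with hXing
      set Wt : V × V → ℝ :=
        fun p => if p.1 ∈ S ∧ p.2 ∈ S ∧ Xing p.1 p.2 then w p.1 p.2 else 0 with hWt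
      set Cc : V × V → ℂ :=
        fun p => if p.1 ∈ Cs then σ p.1 p.2 * τ p.2 * (τ p.1)⁻¹
          else τ p.1 * (σ p.1 p.2 * τ p.2)⁻¹ with hCc
      have hWt_nn : ∀ e, 0 ≤ Wt e := by
        intro e
        simp only [hWt]
        split
        · exact hw_nn _ _
        · exact le_refl 0
      have hCc_u : ∀ e, ‖Cc e‖ = 1 := by
        intro e
        simp only [hCc]
        split
        · simp [norm_mul, norm_inv, hσu, hτ]
        · simp [norm_mul, norm_inv, hσu, hτ]
      -- existence of a crossing pair with positive weight
      have ha0Cs : a0 ∈ Cs := ⟨ha0, by exact SimpleGraph.Reachable.refl _⟩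
      have hbCs : b.1 ∉ Cs := by
        intro hbc
        exact hb ((hmemCs b).1 hbc)
      obtain ⟨x0, y0, hR0, hx0, hy0⟩ :=
        cross_of_chain (hconn a0 ha0 b.1 b.2) ha0Cs hbCs
      have hWt0 : Wt (x0, y0) ≠ 0 := by
        simp only [hWt]
        rw [if_pos ⟨hR0.1, hR0.2.1, Or.inl ⟨hx0, hy0⟩⟩]
        exact hR0.2.2.2
      obtain ⟨e, he, hemin⟩ := rot Wt Cc hWt_nn hCc_u hWt0
      have hcond : e.1 ∈ S ∧ e.2 ∈ S ∧ Xing e.1 e.2 := by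
        by_contra hc
        exact he (by simp only [hWt]; rw [if_neg hc])
      have hwe : w e.1 e.2 ≠ 0 := by
        intro hb0
        exact he (by simp only [hWt]; split <;> simp [hb0])
      set u : ℂ := Cc e with hu
      have huu : ‖u‖ = 1 := hCc_u e
      set τ' : V → ℂ := fun v => if v ∈ Cs then u * τ v else τ v with hτ'def
      have hτ'u : ∀ x, ‖τ' x‖ = 1 := by
        intro x
        simp only [hτ'def]
        split
        · simp [norm_mul, huu, hτ]
        · exact hτ x
      -- the value identity
      have claim : ∀ u' : ℂ, ‖u'‖ = 1 →
          frustVal w σ S (fun v => if v ∈ Cs then u' * τ v else τ v) =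
            (1 / 2) * (∑ x ∈ S, ∑ y ∈ S,
              (if Xing x y then 0 else w x y * ‖σ x y * τ y - τ x‖))
            + (1 / 2) * ∑ e' : V × V, Wt e' * ‖u' - Cc e'‖ := by
        intro u' hu'
        set T : V → ℂ := fun v => if v ∈ Cs then u' * τ v else τ v with hT
        have hterm : ∀ x ∈ S, ∀ y ∈ S,
            w x y * ‖σ x y * T y - T x‖ =
              (if Xing x y then 0 else w x y * ‖σ x y * τ y - τ x‖)
                + Wt (x, y) * ‖u' - Cc (x, y)‖ := by
          intro x hx y hy
          by_cases hxC : x ∈ Cs <;> by_cases hyC : y ∈ Cs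
          · -- both inside
            have hXf : ¬ Xing x y := by simp [hXing, hxC, hyC]
            have hWf : Wt (x, y) = 0 := by
              simp only [hWt]; rw [if_neg (by tauto)]
            simp only [hT, if_pos hxC, if_pos hyC, hWf, if_neg hXf, zero_mul, add_zero]
            have : σ x y * (u' * τ y) - u' * τ x = u' * (σ x y * τ y - τ x) := by ring
            rw [this, norm_mul, hu', one_mul]
          · -- x in, y out
            have hXt : Xing x y := Or.inl ⟨hxC, hyC⟩
            have hWv : Wt (x, y) = w x y := by
              simp only [hWt]; rw [if_pos ⟨hx, hy, hXt⟩]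
            have hCv : Cc (x, y) = σ x y * τ y * (τ x)⁻¹ := by
              simp only [hCc]; rw [if_pos hxC]
            simp only [hT, if_pos hxC, if_neg hyC, hWv, hCv, if_pos hXt, zero_add]
            have hkey : σ x y * τ y - u' * τ x
                = -((u' - σ x y * τ y * (τ x)⁻¹) * τ x) := by
              field_simp [hτne x]
              ring
            rw [hkey, norm_neg, norm_mul, hτ, mul_one]
          · -- x out, y in
            have hXt : Xing x y := Or.inr ⟨hyC, hxC⟩
            have hWv : Wt (x, y) = w x y := by
              simp only [hWt]; rw [if_pos ⟨hx, hy, hXt⟩]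
            have hCv : Cc (x, y) = τ x * (σ x y * τ y)⁻¹ := by
              simp only [hCc]; rw [if_neg hxC]
            simp only [hT, if_neg hxC, if_pos hyC, hWv, hCv, if_pos hXt, zero_add]
            have hkey : σ x y * (u' * τ y) - τ x
                = (u' - τ x * (σ x y * τ y)⁻¹) * (σ x y * τ y) := by
              field_simp [hσne x y, hτne y]
            rw [hkey, norm_mul, norm_mul, hσu, hτ, mul_one, mul_one]
          · -- both outside
            have hXf : ¬ Xing x y := by simp [hXing, hxC, hyC]
            have hWf : Wt (x, y) = 0 := by
              simp only [hWt]; rw [if_neg (by tauto)]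
            simp only [hT, if_neg hxC, if_neg hyC, hWf, if_neg hXf, zero_mul, add_zero]
        have hsum1 : ∑ x ∈ S, ∑ y ∈ S, w x y * ‖σ x y * T y - T x‖
            = (∑ x ∈ S, ∑ y ∈ S, (if Xing x y then 0 else w x y * ‖σ x y * τ y - τ x‖))
              + ∑ x ∈ S, ∑ y ∈ S, Wt (x, y) * ‖u' - Cc (x, y)‖ := by
          rw [← Finset.sum_add_distrib]
          refine Finset.sum_congr rfl fun x hx => ?_
          rw [← Finset.sum_add_distrib]
          exact Finset.sum_congr rfl fun y hy => hterm x hx y hy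
        have hext : ∑ x ∈ S, ∑ y ∈ S, Wt (x, y) * ‖u' - Cc (x, y)‖
            = ∑ e' : V × V, Wt e' * ‖u' - Cc e'‖ := by
          rw [Fintype.sum_prod_type]
          have h1 : ∀ x : V, ∑ y ∈ S, Wt (x, y) * ‖u' - Cc (x, y)‖
              = ∑ y : V, Wt (x, y) * ‖u' - Cc (x, y)‖ := by
            intro x
            refine Finset.sum_subset (Finset.subset_univ S) fun y _ hy => ?_
            have hz : Wt (x, y) = 0 := by simp only [hWt]; rw [if_neg (by tauto)]
            rw [hz, zero_mul]
          rw [Finset.sum_congr rfl fun x _ => h1 x]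
          refine Finset.sum_subset (Finset.subset_univ S) fun x _ hx => ?_
          refine Finset.sum_eq_zero fun y _ => ?_
          have hz : Wt (x, y) = 0 := by simp only [hWt]; rw [if_neg (by tauto)]
          rw [hz, zero_mul]
        simp only [frustVal]
        rw [hsum1, hext]
        ring
      -- compare values
      have hval1 : frustVal w σ S τ =
          (1 / 2) * (∑ x ∈ S, ∑ y ∈ S,
            (if Xing x y then 0 else w x y * ‖σ x y * τ y - τ x‖))
          + (1 / 2) * ∑ e' : V × V, Wt e' * ‖(1:ℂ) - Cc e'‖ := by
        have h := claim 1 (by simp)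
        have heq : (fun v => if v ∈ Cs then (1:ℂ) * τ v else τ v) = τ := by
          funext v; split <;> simp
        rwa [heq] at h
      have hval2 : frustVal w σ S τ' =
          (1 / 2) * (∑ x ∈ S, ∑ y ∈ S,
            (if Xing x y then 0 else w x y * ‖σ x y * τ y - τ x‖))
          + (1 / 2) * ∑ e' : V × V, Wt e' * ‖u - Cc e'‖ := by
        rw [hτ'def]
        exact claim u huu
      have hle : frustVal w σ S τ' ≤ frustVal w σ S τ := by
        rw [hval1, hval2]
        have hm := hemin 1 (by simp)
        have : (1 / 2 : ℝ) * ∑ e' : V × V, Wt e' * ‖u - Cc e'‖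
            ≤ (1 / 2) * ∑ e' : V × V, Wt e' * ‖(1:ℂ) - Cc e'‖ := by
          apply mul_le_mul_of_nonneg_left _ (by norm_num)
          exact hm
        linarith
      -- graph grows
      have hmono : Hgraph w σ S τ ≤ Hgraph w σ S τ' := by
        rintro a b ⟨hne, hw1, hw2, hs1, hs2⟩
        by_cases haC : a.1 ∈ Cs
        · have hbC : b.1 ∈ Cs := by
            rw [hmemCs] at haC ⊢
            exact haC.trans (SimpleGraph.Adj.reachable ⟨hne, hw1, hw2, hs1, hs2⟩)
          refine ⟨hne, hw1, hw2, ?_, ?_⟩ <;>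
            simp only [hτ'def, if_pos haC, if_pos hbC]
          · rw [mul_left_comm, hs1]
          · rw [mul_left_comm, hs2]
        · have hbC : b.1 ∉ Cs := by
            intro hbC
            apply haC
            rw [hmemCs] at hbC ⊢
            exact hbC.trans
              (SimpleGraph.Adj.reachable ⟨hne.symm, hw2, hw1, hs2, hs1⟩)
          refine ⟨hne, hw1, hw2, ?_, ?_⟩ <;>
            simp only [hτ'def, if_neg haC, if_neg hbC]
          exacts [hs1, hs2]
      -- a new vertex becomes reachable
      have hXY : e.1 ≠ e.2 := by
        rcases hcond.2.2 with ⟨h1C, h2C⟩ | ⟨h2C, h1C⟩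
        · exact fun h => h2C (h ▸ h1C)
        · exact fun h => h1C (h ▸ h2C)
      have hadjnew : (Hgraph w σ S τ').Adj ⟨e.1, hcond.1⟩ ⟨e.2, hcond.2.1⟩ := by
        refine ⟨fun h => hXY (congrArg Subtype.val h), hwe, by rw [← hw_symm]; exact hwe, ?_, ?_⟩
        · show σ e.1 e.2 * τ' e.2 = τ' e.1
          rcases hcond.2.2 with ⟨h1C, h2C⟩ | ⟨h2C, h1C⟩
          · have hueq : u = σ e.1 e.2 * τ e.2 * (τ e.1)⁻¹ := by
              rw [hu]; simp only [hCc]; rw [if_pos h1C]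
            simp only [hτ'def, if_pos h1C, if_neg h2C, hueq]
            field_simp [hτne e.1]
          · have hueq : u = τ e.1 * (σ e.1 e.2 * τ e.2)⁻¹ := by
              rw [hu]; simp only [hCc]; rw [if_neg h1C]
            simp only [hτ'def, if_pos h2C, if_neg h1C, hueq]
            field_simp [hσne e.1 e.2, hτne e.2]
        · show σ e.2 e.1 * τ' e.1 = τ' e.2
          rw [hσs e.1 e.2]
          rcases hcond.2.2 with ⟨h1C, h2C⟩ | ⟨h2C, h1C⟩
          · have hueq : u = σ e.1 e.2 * τ e.2 * (τ e.1)⁻¹ := by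
              rw [hu]; simp only [hCc]; rw [if_pos h1C]
            simp only [hτ'def, if_pos h1C, if_neg h2C, hueq]
            field_simp [hσne e.1 e.2, hτne e.1]
          · have hueq : u = τ e.1 * (σ e.1 e.2 * τ e.2)⁻¹ := by
              rw [hu]; simp only [hCc]; rw [if_neg h1C]
            simp only [hτ'def, if_pos h2C, if_neg h1C, hueq]
            field_simp [hσne e.1 e.2, hτne e.2]
      have hstep : ∃ v : {x : V // x ∈ S}, ¬ (Hgraph w σ S τ).Reachable A v ∧
          (Hgraph w σ S τ').Reachable A v := by
        rcases hcond.2.2 with ⟨h1C, h2C⟩ | ⟨h2C, h1C⟩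
        · refine ⟨⟨e.2, hcond.2.1⟩, fun hr => h2C ((hmemCs _).2 hr), ?_⟩
          exact (((hmemCs ⟨e.1, hcond.1⟩).1 h1C).mono hmono).trans hadjnew.reachable
        · refine ⟨⟨e.1, hcond.1⟩, fun hr => h1C ((hmemCs _).2 hr), ?_⟩
          exact (((hmemCs ⟨e.2, hcond.2.1⟩).1 h2C).mono hmono).trans hadjnew.symm.reachable
      obtain ⟨v, hv1, hv2⟩ := hstep
      have hsubset : (Finset.univ.filter (fun b => (Hgraph w σ S τ).Reachable A b))
          ⊆ (Finset.univ.filter (fun b => (Hgraph w σ S τ').Reachable A b)) := by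
        intro p hp
        rw [Finset.mem_filter] at hp ⊢
        exact ⟨Finset.mem_univ _, hp.2.mono hmono⟩
      have hcardlt : (Finset.univ.filter (fun b => (Hgraph w σ S τ).Reachable A b)).card
          < (Finset.univ.filter (fun b => (Hgraph w σ S τ').Reachable A b)).card := by
        apply Finset.card_lt_card
        refine ⟨hsubset, fun hsup => hv1 ?_⟩
        have := hsup (Finset.mem_filter.2 ⟨Finset.mem_univ _, hv2⟩)
        exact (Finset.mem_filter.1 this).2
      obtain ⟨τ'', h1, h2, h3⟩ := ih τ' hτ'u (by omega)
      exact ⟨τ'', h1, h2.trans hle, h3⟩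

/-- For `U(1)` signatures, the frustration index of a connected subset `S`
equals the minimum over spanning trees `T` of the induced subgraph on `S` of
the value of any switching function that is constant on `T` with respect to
`σ`. -/
theorem frustration_via_spanning_trees
    (w : V → V → ℝ) (σ : V → V → ℂ)
    (hw_symm : ∀ x y, w x y = w y x)
    (hw_nn : ∀ x y, 0 ≤ w x y)
    (hw_loop : ∀ x, w x x = 0)
    (hσu : ∀ x y, ‖σ x y‖ = 1)
    (hσs : ∀ x y, σ y x = (σ x y)⁻¹)
    (S : Finset V) (hS : S.Nonempty) (hconn : ConnOn w S) :
    (⨅ τ : {τ : V → ℂ // ∀ x, ‖τ x‖ = 1}, frustVal w σ S τ.1) =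
    (⨅ p : {p : SimpleGraph {x : V // x ∈ S} × (V → ℂ) //
        p.1.IsTree ∧
        (∀ a b : {x : V // x ∈ S}, p.1.Adj a b → w a.1 b.1 ≠ 0) ∧
        (∀ x, ‖p.2 x‖ = 1) ∧
        ∀ a b : {x : V // x ∈ S}, p.1.Adj a b → σ a.1 b.1 * p.2 b.1 = p.2 a.1},
      frustVal w σ S p.1.2) := by
  classical
  have hbdd1 : BddBelow (Set.range fun τ : {τ : V → ℂ // ∀ x, ‖τ x‖ = 1} =>
      frustVal w σ S τ.1) := by
    refine ⟨0, ?_⟩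
    rintro r ⟨τ, rfl⟩
    exact frustVal_nonneg w σ S τ.1 hw_nn
  have hbdd2 : BddBelow (Set.range fun p : {p : SimpleGraph {x : V // x ∈ S} × (V → ℂ) //
        p.1.IsTree ∧
        (∀ a b : {x : V // x ∈ S}, p.1.Adj a b → w a.1 b.1 ≠ 0) ∧
        (∀ x, ‖p.2 x‖ = 1) ∧
        ∀ a b : {x : V // x ∈ S}, p.1.Adj a b → σ a.1 b.1 * p.2 b.1 = p.2 a.1} =>
      frustVal w σ S p.1.2) := by
    refine ⟨0, ?_⟩
    rintro r ⟨p, rfl⟩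
    exact frustVal_nonneg w σ S p.1.2 hw_nn
  have key : ∀ τ : V → ℂ, (∀ x, ‖τ x‖ = 1) →
      ∃ p : {p : SimpleGraph {x : V // x ∈ S} × (V → ℂ) //
        p.1.IsTree ∧
        (∀ a b : {x : V // x ∈ S}, p.1.Adj a b → w a.1 b.1 ≠ 0) ∧
        (∀ x, ‖p.2 x‖ = 1) ∧
        ∀ a b : {x : V // x ∈ S}, p.1.Adj a b → σ a.1 b.1 * p.2 b.1 = p.2 a.1},
        frustVal w σ S p.1.2 ≤ frustVal w σ S τ := by
    intro τ hτ
    obtain ⟨τ', hτ'u, hle, hconn'⟩ :=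
      exists_connected w σ hw_symm hw_nn hσu hσs S hS hconn τ hτ
    obtain ⟨T, hTle, hTt⟩ := exists_spanning_tree hconn'
    exact ⟨⟨(T, τ'), hTt, fun a b h => (hTle h).2.1, hτ'u,
      fun a b h => (hTle h).2.2.2.1⟩, hle⟩
  haveI hne1 : Nonempty {τ : V → ℂ // ∀ x, ‖τ x‖ = 1} :=
    ⟨⟨fun _ => 1, fun _ => norm_one⟩⟩
  obtain ⟨p0, _⟩ := key (fun _ => 1) (fun _ => norm_one)
  haveI hne2 : Nonempty {p : SimpleGraph {x : V // x ∈ S} × (V → ℂ) //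
        p.1.IsTree ∧
        (∀ a b : {x : V // x ∈ S}, p.1.Adj a b → w a.1 b.1 ≠ 0) ∧
        (∀ x, ‖p.2 x‖ = 1) ∧
        ∀ a b : {x : V // x ∈ S}, p.1.Adj a b → σ a.1 b.1 * p.2 b.1 = p.2 a.1} := ⟨p0⟩
  apply le_antisymm
  · refine le_ciInf fun p => ?_
    exact ciInf_le hbdd1 ⟨p.1.2, p.2.2.2.1⟩
  · refine le_ciInf fun τ => ?_
    obtain ⟨p, hp⟩ := key τ.1 τ.2
    exact (ciInf_le hbdd2 p).trans hp
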